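/- arXiv:math/0511160 — 5 statements merged into one kernel-verified Lean document; each statement's English description precedes it below -/
import Mathlib

section
/- Let V be a finite-dimensional vector space over a field of characteristic zero, N : V → V a nilpotent endomorphism, and k ∈ ℤ. If W_• and W'_• are both weight filtrations of N centered at k (increasing, exhaustive, separated filtrations with N(W_j) ⊆ W_{j−2} and N^j inducing isomorphisms Gr^W_{k+j} ≅ Gr^W_{k−j} for all j ≥ 0), then W_j = W'_j for all j. -/
/-- A weight filtration of a nilpotent endomorphism `N` centered at `k`: an increasing,
exhaustive and separated filtration `W` with `N(W_j) ⊆ W_{j−2}` such that for every `j ≥ 0`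
the map induced by `N^j` from `Gr^W_{k+j} = W_{k+j}/W_{k+j−1}` to `Gr^W_{k−j} = W_{k−j}/W_{k−j−1}`
is an isomorphism.  The last two clauses express, at the level of submodules, injectivity and
surjectivity of this induced map. -/
structure IsWeightFiltration {F V : Type*} [Field F] [AddCommGroup V] [Module F V]
    (N : V →ₗ[F] V) (k : ℤ) (W : ℤ → Submodule F V) : Prop where
  mono : Monotone W
  eventually_bot : ∃ a : ℤ, ∀ j ≤ a, W j = ⊥
  eventually_top : ∃ b : ℤ, ∀ j, b ≤ j → W j = ⊤
  map_le : ∀ j : ℤ, (W j).map N ≤ W (j - 2)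
  induced_inj : ∀ j : ℕ, ∀ x ∈ W (k + j), (N ^ j) x ∈ W (k - j - 1) → x ∈ W (k + j - 1)
  induced_surj : ∀ j : ℕ, W (k - j) ≤ W (k - j - 1) ⊔ (W (k + j)).map (N ^ j)

theorem wf_pow_map_le {F V : Type*} [Field F] [AddCommGroup V] [Module F V]
    {N : V →ₗ[F] V} {k : ℤ} {W : ℤ → Submodule F V} (hW : IsWeightFiltration N k W)
    (j : ℤ) (m : ℕ) : (W j).map (N ^ m) ≤ W (j - 2 * m) := by
  induction m with
  | zero => simp [Module.End.one_eq_id, Submodule.map_id]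
  | succ m ih =>
    have h : (N ^ (m + 1)) = N ∘ₗ (N ^ m) := by rw [pow_succ']; rfl
    rw [h, Submodule.map_comp]
    refine le_trans (Submodule.map_mono ih) (le_trans (hW.map_le _) (le_of_eq ?_))
    congr 1
    push_cast
    ring

theorem wf_step {F V : Type*} [Field F] [AddCommGroup V] [Module F V]
    {N : V →ₗ[F] V} {k : ℤ} {W W' : ℤ → Submodule F V}
    (hW : IsWeightFiltration N k W) (hW' : IsWeightFiltration N k W')
    (i : ℤ) (hi : 0 ≤ i)
    (h1 : W (k + i + 1) ≤ W' (k + i + 1)) (h2 : W (k - i - 2) ≤ W' (k - i - 2)) :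
    W (k + i) ≤ W' (k + i) ∧ W (k - i - 1) ≤ W' (k - i - 1) := by
  set j' : ℕ := i.toNat + 1 with hj'def
  have hj' : (j' : ℤ) = i + 1 := by simp [hj'def]; omega
  constructor
  · intro x hx
    have hx1 : x ∈ W' (k + (j' : ℤ)) := by
      rw [hj', show k + (i + 1) = k + i + 1 by ring]
      exact h1 (hW.mono (by omega) hx)
    have hx2 : (N ^ j') x ∈ W' (k - (j' : ℤ) - 1) := by
      have hm : (N ^ j') x ∈ W (k + i - 2 * (j' : ℤ)) :=
        wf_pow_map_le hW _ _ ⟨x, hx, rfl⟩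
      rw [show k + i - 2 * (j' : ℤ) = k - i - 2 by omega] at hm
      rw [show k - (j' : ℤ) - 1 = k - i - 2 by omega]
      exact h2 hm
    have := hW'.induced_inj j' x hx1 hx2
    rwa [show k + (j' : ℤ) - 1 = k + i by omega] at this
  · have hs := hW.induced_surj j'
    rw [show k - (j' : ℤ) = k - i - 1 by omega] at hs
    refine le_trans hs (sup_le ?_ ?_)
    · rw [show k - i - 1 - 1 = k - i - 2 by ring]
      exact le_trans h2 (hW'.mono (by omega))
    · rw [show k + (j' : ℤ) = k + i + 1 by omega]
      refine le_trans (Submodule.map_mono h1) (le_trans (wf_pow_map_le hW' _ _) (le_of_eq ?_))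
      congr 1
      omega

/-- Uniqueness of the weight filtration: two weight filtrations of the same nilpotent
endomorphism `N` centered at the same `k` coincide. -/
theorem stmt7 {F V : Type*} [Field F] [CharZero F] [AddCommGroup V] [Module F V]
    [FiniteDimensional F V] (N : V →ₗ[F] V) (hN : IsNilpotent N) (k : ℤ)
    (W W' : ℤ → Submodule F V)
    (hW : IsWeightFiltration N k W) (hW' : IsWeightFiltration N k W') :
    ∀ j : ℤ, W j = W' j := by
  obtain ⟨a, ha⟩ := hW.eventually_bot
  obtain ⟨b, hb⟩ := hW.eventually_top
  obtain ⟨a', ha'⟩ := hW'.eventually_bot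
  obtain ⟨b', hb'⟩ := hW'.eventually_top
  set M : ℕ := (max (max (b - k) (b' - k)) (max (k - a - 1) (k - a' - 1))).toNat with hM
  have hMb : b ≤ k + (M : ℤ) := by omega
  have hMb' : b' ≤ k + (M : ℤ) := by omega
  have hMa : k - (M : ℤ) - 1 ≤ a := by omega
  have hMa' : k - (M : ℤ) - 1 ≤ a' := by omega
  have key : ∀ d : ℕ, ∀ i : ℤ, (M : ℤ) - d ≤ i → 0 ≤ i →
      W (k + i) = W' (k + i) ∧ W (k - i - 1) = W' (k - i - 1) := by
    intro d
    induction d with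
    | zero =>
      intro i hiM _
      constructor
      · rw [hb _ (by omega), hb' _ (by omega)]
      · rw [ha _ (by omega), ha' _ (by omega)]
    | succ d ih =>
      intro i hiM hi0
      by_cases hcase : (M : ℤ) - d ≤ i
      · exact ih i hcase hi0
      · obtain ⟨e1, e2⟩ := ih (i + 1) (by omega) (by omega)
        have e1' : W (k + i + 1) = W' (k + i + 1) := by
          rwa [show k + i + 1 = k + (i + 1) by ring]
        have e2' : W (k - i - 2) = W' (k - i - 2) := by
          rwa [show k - (i + 1) - 1 = k - i - 2 by ring] at e2
        have A := wf_step hW hW' i hi0 e1'.le e2'.le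
        have B := wf_step hW' hW i hi0 e1'.ge e2'.ge
        exact ⟨le_antisymm A.1 B.1, le_antisymm A.2 B.2⟩
  intro j
  rcases le_or_gt k j with h | h
  · have := (key M (j - k) (by omega) (by omega)).1
    rwa [show k + (j - k) = j by ring] at this
  · have := (key M (k - 1 - j) (by omega) (by omega)).2
    rwa [show k - (k - 1 - j) - 1 = j by ring] at this
end

section
/- Let V be a finite-dimensional vector space over a field of characteristic zero, N : V → V nilpotent, k ∈ ℤ, and W_• the weight filtration of N centered at k. For ℓ ≥ 0 define the primitive part P_{k+ℓ} := ker(N^{ℓ+1} : Gr^W_{k+ℓ} → Gr^W_{k−ℓ−2}). Then there is a Lefschetz-type decomposition: for every m, Gr^W_m = ⊕_{ℓ≥0} ⊕_{r=0}^{ℓ, k+ℓ−2r=m} N^r(P_{k+ℓ}), where N^r denotes the map Gr^W_{k+ℓ} → Gr^W_{k+ℓ−2r} induced by N^r; i.e. Gr^W V = ⊕_{ℓ≥0} ⊕_{r=0}^{ℓ} N^r P_{k+ℓ}. -/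
variable {F V : Type*} [Field F] [AddCommGroup V] [Module F V]

/-- The graded piece `Gr^W_m = W_m / W_{m−1}`. -/
abbrev Gr (W : ℤ → Submodule F V) (m : ℤ) : Type _ :=
  W m ⧸ (W (m - 1)).comap (W m).subtype

lemma pow_map_mem {N : V →ₗ[F] V} {W : ℤ → Submodule F V}
    (hmap : ∀ j : ℤ, (W j).map N ≤ W (j - 2)) (j : ℕ) (m : ℤ)
    {x : V} (hx : x ∈ W m) : (N ^ j) x ∈ W (m - 2 * j) := by
  induction j with
  | zero => simpa using hx
  | succ n ih =>
      have h1 : N ((N ^ n) x) ∈ W (m - 2 * n - 2) :=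
        hmap (m - 2 * n) ⟨(N ^ n) x, ih, rfl⟩
      have h2 : (N ^ (n + 1)) x = N ((N ^ n) x) := by
        rw [pow_succ']; rfl
      rw [h2]
      convert h1 using 2
      push_cast; ring

/-- The map `Gr^W_m → Gr^W_{m'}` induced by `N^j`, defined whenever `m − 2j ≤ m'`. -/
noncomputable def grMap (N : V →ₗ[F] V) (W : ℤ → Submodule F V) (hmono : Monotone W)
    (hmap : ∀ j : ℤ, (W j).map N ≤ W (j - 2)) (j : ℕ) (m m' : ℤ) (h : m - 2 * j ≤ m') :
    Gr W m →ₗ[F] Gr W m' :=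
  Submodule.mapQ _ _
    ((N ^ j).restrict (p := W m) (q := W m') fun x hx => hmono h (pow_map_mem hmap j m hx))
    (fun x hx => by
      have : (N ^ j) (x : V) ∈ W (m - 1 - 2 * j) := pow_map_mem hmap j (m - 1) hx
      exact hmono (by omega) this)

/-- The primitive part `P_{k+ℓ} = ker (N^{ℓ+1} : Gr^W_{k+ℓ} → Gr^W_{k−ℓ−2})`. -/
noncomputable def prim (N : V →ₗ[F] V) (W : ℤ → Submodule F V) (k : ℤ) (hmono : Monotone W)
    (hmap : ∀ j : ℤ, (W j).map N ≤ W (j - 2)) (ℓ : ℕ) : Submodule F (Gr W (k + ℓ)) :=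
  LinearMap.ker (grMap N W hmono hmap (ℓ + 1) (k + ℓ) (k - ℓ - 2) (by push_cast; omega))

theorem iSupIndep_nat_of_disjoint_iSup_succ {α : Type*} [CompleteLattice α] [IsModularLattice α]
    {t : ℕ → α} (h0 : Disjoint (t 0) (⨆ r, t (r + 1))) (hsucc : iSupIndep fun r => t (r + 1)) :
    iSupIndep t := by
  rintro (_ | r)
  · refine h0.mono_right (iSup₂_le ?_)
    rintro (_ | j) hj
    · exact absurd rfl hj
    · exact le_iSup (fun r => t (r + 1)) j
  · have hle : (⨆ (j) (_ : j ≠ r + 1), t j) ≤ (⨆ (j) (_ : j ≠ r), t (j + 1)) ⊔ t 0 := by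
      refine iSup₂_le ?_
      rintro (_ | j) hj
      · exact le_sup_right
      · exact le_sup_of_le_left (le_iSup₂_of_le j (fun h => hj (by rw [h])) le_rfl)
    refine Disjoint.mono_right hle ((hsucc r).disjoint_sup_right_of_disjoint_sup_left ?_)
    exact h0.symm.mono_left (sup_le (le_iSup (fun r => t (r + 1)) r) (iSup₂_le fun j _ =>
      le_iSup (fun r => t (r + 1)) j))

namespace Submodule

variable {R M M' : Type*} [Ring R] [AddCommGroup M] [Module R M] [AddCommGroup M'] [Module R M']

theorem iSupIndep_map {ι : Sort*} {f : M →ₗ[R] M'} (hf : Function.Injective f)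
    {p : ι → Submodule R M} (hp : iSupIndep p) : iSupIndep fun i => (p i).map f := fun i => by
  simpa only [map_iSup] using disjoint_map hf (hp i)

end Submodule

theorem LinearMap.isCompl_ker_range_of_bijective_comp {R M₁ M₂ M₃ : Type*} [Ring R]
    [AddCommGroup M₁] [Module R M₁] [AddCommGroup M₂] [Module R M₂] [AddCommGroup M₃] [Module R M₃]
    {f : M₁ →ₗ[R] M₂} {g : M₂ →ₗ[R] M₃} (h : Function.Bijective (g ∘ₗ f)) :
    IsCompl (LinearMap.ker g) (LinearMap.range f) := by
  constructor
  · rw [Submodule.disjoint_def]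
    rintro _ hx ⟨y, rfl⟩
    obtain rfl : y = 0 := h.1 (by simpa using hx)
    exact map_zero f
  · rw [codisjoint_iff, Submodule.eq_top_iff']
    intro x
    obtain ⟨y, hy⟩ := h.2 (g x)
    refine Submodule.mem_sup.2 ⟨x - f y, ?_, f y, ⟨y, rfl⟩, sub_add_cancel x (f y)⟩
    rw [LinearMap.mem_ker, map_sub, ← LinearMap.comp_apply, hy, sub_self]

namespace DirectSum

variable {R M M' : Type*} [Ring R] [AddCommGroup M] [Module R M] [AddCommGroup M'] [Module R M']

theorem IsInternal.submodule_map {ι : Type*} [DecidableEq ι] {p : ι → Submodule R M}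
    (hp : IsInternal p) {f : M →ₗ[R] M'} (hf : Function.Bijective f) :
    IsInternal fun i => (p i).map f := by
  rw [isInternal_submodule_iff_iSupIndep_and_iSup_eq_top] at hp ⊢
  refine ⟨Submodule.iSupIndep_map hf.1 hp.1, ?_⟩
  rw [← Submodule.map_iSup, hp.2, Submodule.map_top, LinearMap.range_eq_top.2 hf.2]

theorem isInternal_submodule_comp_iff {ι ι' : Type*} [DecidableEq ι] [DecidableEq ι']
    {p : ι → Submodule R M} {f : ι' → ι} (hf : Function.Injective f)
    (hp : ∀ i, p i ≠ ⊥ → i ∈ Set.range f) : IsInternal (p ∘ f) ↔ IsInternal p := by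
  have hle : ∀ i, ∀ s : Submodule R M, (∀ i', f i' = i → p i ≤ s) → p i ≤ s := fun i s hs => by
    by_cases hi : p i = ⊥
    · exact hi ▸ bot_le
    · obtain ⟨i', rfl⟩ := hp i hi
      exact hs i' rfl
  have hsup : iSup (p ∘ f) = iSup p :=
    le_antisymm (iSup_comp_le p f) (iSup_le fun i => hle i _ fun i' hi' => hi' ▸ le_iSup (p ∘ f) i')
  simp only [isInternal_submodule_iff_iSupIndep_and_iSup_eq_top, hsup]
  refine and_congr_left fun _ => ⟨fun h i => ?_, fun h => h.comp hf⟩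
  by_cases hi : p i = ⊥
  · exact hi ▸ disjoint_bot_left
  obtain ⟨i, rfl⟩ := hp i hi
  refine (h i).mono_right (iSup₂_le fun j hj => hle j _ fun j' hj' => ?_)
  subst hj'
  exact le_iSup₂_of_le (f := fun j (_ : j ≠ i) => p (f j)) j' (fun h => hj (h ▸ rfl)) le_rfl

theorem isInternal_nat_of_isCompl {p : ℕ → Submodule R M} {q : ℕ → Submodule R M'}
    (hq : IsInternal q) {f : M' →ₗ[R] M} (hf : Function.Injective f)
    (h0 : IsCompl (p 0) (LinearMap.range f)) (hsucc : ∀ r, p (r + 1) = (q r).map f) :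
    IsInternal p := by
  rw [isInternal_submodule_iff_iSupIndep_and_iSup_eq_top] at hq ⊢
  have hrange : (⨆ r, p (r + 1)) = LinearMap.range f := by
    simp only [hsucc, ← Submodule.map_iSup, hq.2, Submodule.map_top]
  refine ⟨iSupIndep_nat_of_disjoint_iSup_succ (hrange ▸ h0.disjoint) ?_, ?_⟩
  · simpa only [hsucc] using Submodule.iSupIndep_map hf hq.1
  · rw [← sup_iSup_nat_succ, hrange, h0.sup_eq_top]

end DirectSum

section GradedMaps

variable {N : V →ₗ[F] V} {W : ℤ → Submodule F V} (hmono : Monotone W)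
  (hmap : ∀ j : ℤ, (W j).map N ≤ W (j - 2))

theorem grMap_comp {j₁ j₂ j : ℕ} (hj : j₁ + j₂ = j) {m₁ m₂ m₃ : ℤ} (h₁ : m₁ - 2 * j₁ ≤ m₂)
    (h₂ : m₂ - 2 * j₂ ≤ m₃) (h : m₁ - 2 * j ≤ m₃) :
    grMap N W hmono hmap j₂ m₂ m₃ h₂ ∘ₗ grMap N W hmono hmap j₁ m₁ m₂ h₁
      = grMap N W hmono hmap j m₁ m₃ h := by
  subst hj
  ext x
  exact congrArg Submodule.Quotient.mk <| Subtype.ext <| by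
    simp [LinearMap.restrict_apply, ← Module.End.mul_apply, ← pow_add, add_comm j₂]

theorem grMap_zero_surjective {m m' : ℤ} (hm : m = m') (h : m - 2 * (0 : ℕ) ≤ m') :
    Function.Surjective (grMap N W hmono hmap 0 m m' h) := by
  subst hm
  refine Submodule.Quotient.mk_surjective _ |>.forall.2 fun x => ⟨Submodule.Quotient.mk x, ?_⟩
  exact congrArg _ (Subtype.ext (by simp))

end GradedMaps

namespace IsWeightFiltration

variable {N : V →ₗ[F] V} {W : ℤ → Submodule F V} {k : ℤ} (hW : IsWeightFiltration N k W)

theorem grMap_bijective {j : ℕ} {m m' : ℤ} (hm : m = k + j) (hm' : m' = k - j)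
    (h : m - 2 * j ≤ m') : Function.Bijective (grMap N W hW.mono hW.map_le j m m' h) := by
  subst hm hm'
  constructor
  · refine (injective_iff_map_eq_zero _).2 fun x hx => ?_
    obtain ⟨⟨v, hv⟩, rfl⟩ := Submodule.Quotient.mk_surjective _ x
    rw [grMap, Submodule.mapQ_apply, Submodule.Quotient.mk_eq_zero] at hx
    exact (Submodule.Quotient.mk_eq_zero _).2 (hW.induced_inj j v hv hx)
  · refine (Submodule.Quotient.mk_surjective _).forall.2 fun ⟨v, hv⟩ => ?_
    obtain ⟨w, hw, _, ⟨u, hu, rfl⟩, rfl⟩ := Submodule.mem_sup.1 (hW.induced_surj j hv)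
    refine ⟨Submodule.Quotient.mk ⟨u, hu⟩, (Submodule.Quotient.eq _).2 ?_⟩
    simpa using (W _).neg_mem hw

/-- The component `N^r P_{k+ℓ}` of `Gr^W_m`, where `ℓ = m - k + 2r`; it is `⊥` unless `r ≤ ℓ`,
i.e. `k - m ≤ r`. -/
noncomputable def lefschetzComponent (m : ℤ) (r : ℕ) : Submodule F (Gr W m) :=
  if h : k - m ≤ r then
    (prim N W k hW.mono hW.map_le (m - k + 2 * r).toNat).map
      (grMap N W hW.mono hW.map_le r (k + (m - k + 2 * r).toNat) m (by omega))
  else ⊥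

theorem map_grMap_prim {ℓ r : ℕ} {m : ℤ} (hr : r ≤ ℓ) (hm : k + ℓ - 2 * r = m) :
    (prim N W k hW.mono hW.map_le ℓ).map (grMap N W hW.mono hW.map_le r (k + ℓ) m hm.le)
      = hW.lefschetzComponent m r := by
  rw [lefschetzComponent, dif_pos (by omega)]
  obtain rfl : ℓ = (m - k + 2 * r).toNat := by omega
  rfl

theorem lefschetzComponent_eq_bot {m : ℤ} {r : ℕ} (hr : (r : ℤ) < k - m) :
    hW.lefschetzComponent m r = ⊥ :=
  dif_neg (by omega)

theorem lefschetzComponent_add {m : ℤ} {j : ℕ} (hj : k ≤ m + j) (r : ℕ) :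
    hW.lefschetzComponent m (r + j)
      = (hW.lefschetzComponent (m + 2 * j) r).map
          (grMap N W hW.mono hW.map_le j (m + 2 * j) m (by omega)) := by
  set ℓ := (m - k + 2 * (r + j)).toNat
  rw [← hW.map_grMap_prim (ℓ := ℓ) (r := r + j) (by omega) (by omega),
    ← hW.map_grMap_prim (ℓ := ℓ) (r := r) (by omega) (by omega), ← Submodule.map_comp,
    grMap_comp _ _ rfl]

theorem lefschetzComponent_zero {ℓ : ℕ} {m : ℤ} (hm : k + ℓ = m) :
    hW.lefschetzComponent m 0
      = LinearMap.ker (grMap N W hW.mono hW.map_le (ℓ + 1) m (k - ℓ - 2) (by omega)) := by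
  rw [← hW.map_grMap_prim (ℓ := ℓ) (r := 0) (Nat.zero_le ℓ) (by omega), prim,
    ← grMap_comp _ _ (zero_add (ℓ + 1)) (m₂ := m) (by omega) (by omega), LinearMap.ker_comp,
    Submodule.map_comap_eq_of_surjective (grMap_zero_surjective _ _ (by omega) _)]

theorem isInternal_lefschetzComponent_of_le {b : ℤ} (hb : ∀ j, b ≤ j → W j = ⊤) (m : ℤ)
    (hm : k ≤ m) : DirectSum.IsInternal (hW.lefschetzComponent m) := by
  by_cases hbm : b ≤ m - 1
  · have : Subsingleton (Gr W m) := by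
      rw [Submodule.Quotient.subsingleton_iff, hb _ hbm, Submodule.comap_top]
    exact DirectSum.isInternal_submodule_of_iSupIndep_of_iSup_eq_top
      (fun r => Subsingleton.elim (hW.lefschetzComponent m r) ⊥ ▸ disjoint_bot_left)
      (Subsingleton.elim _ _)
  obtain ⟨ℓ, hℓ⟩ : ∃ ℓ : ℕ, k + ℓ = m := ⟨(m - k).toNat, by omega⟩
  have hcomp := grMap_comp hW.mono hW.map_le (add_comm 1 (ℓ + 1))
    (m₁ := m + 2 * (1 : ℕ)) (m₂ := m) (m₃ := k - ℓ - 2) (by omega) (by omega) (by omega)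
  have hbij := hcomp ▸ hW.grMap_bijective (by omega) (by omega) _
  exact DirectSum.isInternal_nat_of_isCompl
    (isInternal_lefschetzComponent_of_le hb (m + 2 * (1 : ℕ)) (by omega))
    (Function.Injective.of_comp hbij.1)
    (hW.lefschetzComponent_zero hℓ ▸ LinearMap.isCompl_ker_range_of_bijective_comp hbij)
    (hW.lefschetzComponent_add (by omega))
termination_by (b - m + 1).toNat
decreasing_by omega

theorem isInternal_lefschetzComponent (m : ℤ) :
    DirectSum.IsInternal (hW.lefschetzComponent m) := by
  obtain ⟨b, hb⟩ := hW.eventually_top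
  rcases le_or_gt k m with hm | hm
  · exact hW.isInternal_lefschetzComponent_of_le hb m hm
  obtain ⟨j, hj⟩ : ∃ j : ℕ, k - j = m := ⟨(k - m).toNat, by omega⟩
  have hmirror := (hW.isInternal_lefschetzComponent_of_le hb (m + 2 * j) (by omega)).submodule_map
    (hW.grMap_bijective (by omega) hj.symm (by omega))
  rw [← DirectSum.isInternal_submodule_comp_iff (add_left_injective j)]
  · have hshift := hW.lefschetzComponent_add (m := m) (j := j) (by omega)
    simpa only [Function.comp_def, hshift] using hmirror
  · intro r hr
    have hjr : j ≤ r := not_lt.1 fun h => hr (hW.lefschetzComponent_eq_bot (by omega))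
    exact ⟨r - j, Nat.sub_add_cancel hjr⟩

end IsWeightFiltration

theorem stmt8_general
    (N : V →ₗ[F] V) (k : ℤ) (W : ℤ → Submodule F V)
    (hW : IsWeightFiltration N k W) (m : ℤ) :
    DirectSum.IsInternal
      (fun i : {x : ℕ × ℕ // x.2 ≤ x.1 ∧ (k : ℤ) + x.1 - 2 * x.2 = m} =>
        Submodule.map
          (grMap N W hW.mono hW.map_le i.1.2 (k + i.1.1) m (le_of_eq i.2.2))
          (prim N W k hW.mono hW.map_le i.1.1)) := by
  have hfamily : (fun i : {x : ℕ × ℕ // x.2 ≤ x.1 ∧ (k : ℤ) + x.1 - 2 * x.2 = m} =>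
      (prim N W k hW.mono hW.map_le i.1.1).map
        (grMap N W hW.mono hW.map_le i.1.2 (k + i.1.1) m (le_of_eq i.2.2)))
      = hW.lefschetzComponent m ∘ fun i => i.1.2 :=
    funext fun i => hW.map_grMap_prim i.2.1 i.2.2
  rw [hfamily, DirectSum.isInternal_submodule_comp_iff]
  · exact hW.isInternal_lefschetzComponent m
  · rintro ⟨⟨ℓ₁, r₁⟩, -, h₁⟩ ⟨⟨ℓ₂, r₂⟩, -, h₂⟩ (hr : r₁ = r₂)
    exact Subtype.ext (Prod.ext (by dsimp only at h₁ h₂ ⊢; omega) hr)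
  · intro r hr
    have hkr : k - m ≤ r := not_lt.1 fun h => hr (hW.lefschetzComponent_eq_bot h)
    exact ⟨⟨((m - k + 2 * r).toNat, r), by omega, by omega⟩, rfl⟩

/-- Lefschetz-type decomposition: for every `m`,
`Gr^W_m = ⊕_{ℓ≥0} ⊕_{0≤r≤ℓ, k+ℓ−2r=m} N^r(P_{k+ℓ})`. -/
theorem stmt8 [CharZero F] [FiniteDimensional F V]
    (N : V →ₗ[F] V) (hN : IsNilpotent N) (k : ℤ) (W : ℤ → Submodule F V)
    (hW : IsWeightFiltration N k W) (m : ℤ) :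
    DirectSum.IsInternal
      (fun i : {x : ℕ × ℕ // x.2 ≤ x.1 ∧ (k : ℤ) + x.1 - 2 * x.2 = m} =>
        Submodule.map
          (grMap N W hW.mono hW.map_le i.1.2 (k + i.1.1) m (le_of_eq i.2.2))
          (prim N W k hW.mono hW.map_le i.1.1)) :=
  stmt8_general N k W hW m
end

section
/- Let V be a finite-dimensional vector space over a field of characteristic zero, N : V → V nilpotent, k ∈ ℤ, and W_• the weight filtration of N centered at k, with primitive parts P_{k+ℓ} := ker(N^{ℓ+1} : Gr^W_{k+ℓ} → Gr^W_{k−ℓ−2}) for ℓ ≥ 0. Then for every m ≥ 1, the number of Jordan blocks of N of size m equals dim P_{k+m−1}; equivalently, dim P_{k+m−1} = rank(N^{m−1}) − 2·rank(N^m) + rank(N^{m+1}). -/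
variable {F V : Type*} [Field F] [AddCommGroup V] [Module F V]

section MyAux

open Module LinearMap

variable {N : V →ₗ[F] V} {k : ℤ} {W : ℤ → Submodule F V}

/-- Anything sent by `N^m` into `W (k−m−1)` lies in `W (k+m−1)`. -/
lemma my_comap_pow_le (hW : IsWeightFiltration N k W) (m : ℕ) :
    (W (k - m - 1)).comap (N ^ m : V →ₗ[F] V) ≤ W (k + m - 1) := by
  obtain ⟨b, hb⟩ := hW.eventually_top
  have step : ∀ t : ℕ,
      (W (k - m - 1)).comap (N ^ m : V →ₗ[F] V) ≤ W (k + m - 1 + (t + 1)) →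
      (W (k - m - 1)).comap (N ^ m : V →ₗ[F] V) ≤ W (k + m - 1 + t) := by
    intro t ih x hx
    have hx' : (N ^ m) x ∈ W (k - m - 1) := hx
    have hxW : x ∈ W (k + ((m + t : ℕ) : ℤ)) := by
      rw [show (k + ((m + t : ℕ) : ℤ)) = k + (m : ℤ) - 1 + ((t : ℕ) + 1 : ℕ) by push_cast; ring]
      exact ih hx
    have hNx : (N ^ (m + t)) x ∈ W (k - ((m + t : ℕ) : ℤ) - 1) := by
      have e : (N ^ (m + t)) x = (N ^ t) ((N ^ m) x) := by
        rw [show m + t = t + m by omega, pow_add, Module.End.mul_apply]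
      rw [e]
      have := pow_map_mem hW.map_le t (k - m - 1) hx'
      exact hW.mono (by push_cast; omega) this
    have := hW.induced_inj (m + t) x hxW hNx
    exact hW.mono (by push_cast; omega) this
  have base : ∀ t : ℕ, (b - (k + m - 1)).toNat ≤ t →
      (W (k - m - 1)).comap (N ^ m : V →ₗ[F] V) ≤ W (k + m - 1 + t) := by
    intro t ht
    have : b ≤ k + m - 1 + t := by
      have := Int.self_le_toNat (b - (k + (m : ℤ) - 1))
      omega
    rw [hb _ this]
    exact le_top
  set T := (b - (k + (m : ℤ) - 1)).toNat with hT
  have desc : ∀ s : ℕ, (W (k - m - 1)).comap (N ^ m : V →ₗ[F] V) ≤ W (k + m - 1 + (T - s : ℕ)) := by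
    intro s
    induction s with
    | zero => simpa using base T le_rfl
    | succ s ih =>
        rcases le_or_gt T s with h | h
        · rw [show T - (s + 1) = T - s by omega]; exact ih
        · have e : T - s = (T - (s + 1)) + 1 := by omega
          rw [e] at ih
          exact step _ ih
  have := desc T
  simpa using this

/-- `W (k−m−1)` is contained in `N^m (W (k+m−1))`. -/
lemma my_le_map_pow (hW : IsWeightFiltration N k W) (m : ℕ) :
    W (k - m - 1) ≤ (W (k + m - 1)).map (N ^ m : V →ₗ[F] V) := by
  obtain ⟨a, ha⟩ := hW.eventually_bot
  have step : ∀ t : ℕ, W (k - m - 1 - t) ≤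
      W (k - m - 1 - (t + 1 : ℕ)) ⊔ (W (k + m - 1)).map (N ^ m : V →ₗ[F] V) := by
    intro t x hx
    have hx' : x ∈ W (k - ((m + 1 + t : ℕ) : ℤ)) := by
      have e : k - ((m + 1 + t : ℕ) : ℤ) = k - m - 1 - t := by push_cast; ring
      rw [e]; exact hx
    have := hW.induced_surj (m + 1 + t) hx'
    rw [Submodule.mem_sup] at this
    obtain ⟨w, hw, u, hu, huv⟩ := this
    obtain ⟨z, hz, rfl⟩ := hu
    have hz1 : (N ^ (1 + t)) z ∈ W (k + m - 1) := by
      have := pow_map_mem hW.map_le (1 + t) (k + ((m + 1 + t : ℕ) : ℤ)) hz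
      exact hW.mono (by push_cast; omega) this
    have hu' : (N ^ (m + 1 + t)) z ∈ (W (k + m - 1)).map (N ^ m : V →ₗ[F] V) := by
      refine ⟨(N ^ (1 + t)) z, hz1, ?_⟩
      rw [← Module.End.mul_apply, ← pow_add]
      congr 2
      omega
    have hw' : w ∈ W (k - m - 1 - (t + 1 : ℕ)) := by
      have e : k - ((m + 1 + t : ℕ) : ℤ) - 1 = k - m - 1 - ((t + 1 : ℕ) : ℤ) := by push_cast; ring
      rw [← e]; exact hw
    rw [Submodule.mem_sup]
    exact ⟨w, hw', (N ^ (m + 1 + t)) z, hu', huv⟩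
  have chain : ∀ t : ℕ, W (k - m - 1) ≤
      W (k - m - 1 - t) ⊔ (W (k + m - 1)).map (N ^ m : V →ₗ[F] V) := by
    intro t
    induction t with
    | zero => simpa using (le_sup_left :
        W (k - m - 1) ≤ W (k - m - 1 - (0 : ℕ)) ⊔ (W (k + m - 1)).map (N ^ m : V →ₗ[F] V))
    | succ t ih => exact ih.trans (sup_le (step t) le_sup_right)
  set T := (k - (m : ℤ) - 1 - a).toNat with hT
  have hbot : W (k - m - 1 - T) = ⊥ := by
    apply ha
    have := Int.self_le_toNat (k - (m : ℤ) - 1 - a)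
    omega
  have := chain T
  rw [hbot, bot_sup_eq] at this
  exact this

lemma my_ker_dim [FiniteDimensional F V] (hW : IsWeightFiltration N k W) (m : ℕ) (a b : ℤ)
    (hA : a = k + m - 1) (hB : b = k - m - 1) :
    finrank F (W a) = finrank F (LinearMap.ker (N ^ m : V →ₗ[F] V)) + finrank F (W b) := by
  subst hA hB
  set g := (N ^ m : V →ₗ[F] V).domRestrict (W (k + m - 1)) with hg
  have hr : LinearMap.range g = W (k - m - 1) := by
    apply le_antisymm
    · rintro _ ⟨x, rfl⟩
      have := pow_map_mem hW.map_le m (k + m - 1) x.2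
      exact hW.mono (by omega) this
    · intro y hy
      obtain ⟨x, hx, rfl⟩ := my_le_map_pow hW m hy
      exact ⟨⟨x, hx⟩, rfl⟩
  have hkle : LinearMap.ker (N ^ m : V →ₗ[F] V) ≤ W (k + m - 1) := by
    refine le_trans ?_ (my_comap_pow_le hW m)
    intro x hx
    simp only [LinearMap.mem_ker] at hx
    simp [Submodule.mem_comap, hx]
  have hker : LinearMap.ker g =
      (LinearMap.ker (N ^ m : V →ₗ[F] V)).comap (W (k + m - 1)).subtype := by
    ext x
    simp [hg, LinearMap.mem_ker]
  have hkd : finrank F (LinearMap.ker g) = finrank F (LinearMap.ker (N ^ m : V →ₗ[F] V)) := by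
    rw [hker]
    exact (Submodule.comapSubtypeEquivOfLe hkle).finrank_eq
  have := LinearMap.finrank_range_add_finrank_ker g
  rw [hr, hkd] at this
  omega

lemma my_gr_dim [FiniteDimensional F V] (hW : IsWeightFiltration N k W) (a b : ℤ)
    (hB : b = a - 1) :
    finrank F (W a) = finrank F (Gr W a) + finrank F (W b) := by
  subst hB
  have h2 : finrank F ((W (a - 1)).comap (W a).subtype) = finrank F (W (a - 1)) :=
    (Submodule.comapSubtypeEquivOfLe (hW.mono (by omega))).finrank_eq
  have h' : finrank F (Gr W a) + finrank F (W (a - 1)) = finrank F (W a) := by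
    rw [← h2]
    exact Submodule.finrank_quotient_add_finrank _
  omega

lemma my_grMap_surjective (hW : IsWeightFiltration N k W) (j i : ℕ) (hij : j ≤ i)
    (a b : ℤ) (hA : a = k - i + 2 * j) (hB : b = k - i) (h : a - 2 * j ≤ b) :
    Function.Surjective (grMap N W hW.mono hW.map_le j a b h) := by
  subst hA hB
  intro y
  obtain ⟨⟨v, hv⟩, rfl⟩ := Submodule.Quotient.mk_surjective _ y
  have := hW.induced_surj i hv
  rw [Submodule.mem_sup] at this
  obtain ⟨w, hw, u, hu, huv⟩ := this
  obtain ⟨z, hz, rfl⟩ := hu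
  have hx : (N ^ (i - j)) z ∈ W (k - i + 2 * j) := by
    have := pow_map_mem hW.map_le (i - j) (k + (i : ℤ)) hz
    exact hW.mono (by omega) this
  refine ⟨Submodule.Quotient.mk ⟨(N ^ (i - j)) z, hx⟩, ?_⟩
  rw [grMap, Submodule.mapQ_apply, Submodule.Quotient.eq]
  have he : (N ^ j) ((N ^ (i - j)) z) = (N ^ i) z := by
    rw [← Module.End.mul_apply, ← pow_add]
    congr 2
    omega
  simp only [Submodule.mem_comap, LinearMap.restrict_apply, Submodule.subtype_apply,
    AddSubgroupClass.coe_sub]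
  simp only [he]
  have : (N ^ i) z - v = -w := by
    rw [← huv]; abel
  rw [this]
  exact neg_mem hw

lemma my_grMap_injective (hW : IsWeightFiltration N k W) (j : ℕ)
    (a b : ℤ) (hA : a = k + j) (hB : b = k - j) (h : a - 2 * j ≤ b) :
    Function.Injective (grMap N W hW.mono hW.map_le j a b h) := by
  subst hA hB
  rw [← LinearMap.ker_eq_bot, LinearMap.ker_eq_bot']
  intro x hx0
  obtain ⟨⟨v, hv⟩, rfl⟩ := Submodule.Quotient.mk_surjective _ x
  rw [grMap, Submodule.mapQ_apply, Submodule.Quotient.mk_eq_zero] at hx0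
  simp only [Submodule.mem_comap, LinearMap.restrict_apply, Submodule.subtype_apply] at hx0
  have := hW.induced_inj j v hv hx0
  rw [Submodule.Quotient.mk_eq_zero]
  exact this

lemma my_gr_symm [FiniteDimensional F V] (hW : IsWeightFiltration N k W) (j : ℕ)
    (a b : ℤ) (hA : a = k + j) (hB : b = k - j) :
    finrank F (Gr W a) = finrank F (Gr W b) := by
  have h : a - 2 * j ≤ b := by omega
  exact (LinearEquiv.ofBijective (grMap N W hW.mono hW.map_le j a b h)
    ⟨my_grMap_injective hW j a b hA hB h,
     my_grMap_surjective hW j j le_rfl a b (by omega) hB h⟩).finrank_eq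

lemma my_prim_dim [FiniteDimensional F V] (hW : IsWeightFiltration N k W) (ℓ : ℕ) :
    finrank F (Gr W (k + ℓ)) =
      finrank F (Gr W (k - ℓ - 2)) + finrank F (prim N W k hW.mono hW.map_le ℓ) := by
  set gm := grMap N W hW.mono hW.map_le (ℓ + 1) (k + ℓ) (k - ℓ - 2) (by push_cast; omega) with hgm
  have hsurj : Function.Surjective gm := by
    apply my_grMap_surjective hW (ℓ + 1) (ℓ + 2) (by omega)
    · push_cast; ring
    · push_cast; ring
  have h2 : finrank F (LinearMap.range gm) = finrank F (Gr W (k - ℓ - 2)) := by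
    rw [LinearMap.range_eq_top.mpr hsurj]
    exact finrank_top F _
  have h3 := LinearMap.finrank_range_add_finrank_ker gm
  rw [h2] at h3
  have h4 : finrank F (prim N W k hW.mono hW.map_le ℓ) = finrank F (LinearMap.ker gm) := rfl
  omega

end MyAux

/-- The number of Jordan blocks of `N` of size `m` (which, for a nilpotent endomorphism,
equals `rank(N^{m−1}) − 2·rank(N^m) + rank(N^{m+1})`) equals `dim P_{k+m−1}`. -/
theorem stmt9 [CharZero F] [FiniteDimensional F V]
    (N : V →ₗ[F] V) (hN : IsNilpotent N) (k : ℤ) (W : ℤ → Submodule F V)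
    (hW : IsWeightFiltration N k W) (m : ℕ) (hm : 1 ≤ m) :
    (Module.finrank F (prim N W k hW.mono hW.map_le (m - 1)) : ℤ)
      = (Module.finrank F (LinearMap.range (N ^ (m - 1))) : ℤ)
        - 2 * (Module.finrank F (LinearMap.range (N ^ m)) : ℤ)
        + (Module.finrank F (LinearMap.range (N ^ (m + 1))) : ℤ) := by
  obtain ⟨ℓ, rfl⟩ := Nat.exists_eq_succ_of_ne_zero (by omega : m ≠ 0)
  simp only [Nat.succ_sub_one, Nat.succ_eq_add_one]
  have e1 := my_prim_dim hW ℓ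
  have e2 := my_gr_dim hW (k + (ℓ : ℤ)) (k + (ℓ : ℤ) - 1) rfl
  have e3 := my_gr_dim hW (k - (ℓ : ℤ) - 2) (k - (ℓ : ℤ) - 3) (by ring)
  have e4 := my_gr_dim hW (k + (ℓ : ℤ) + 1) (k + (ℓ : ℤ)) (by ring)
  have e5 := my_gr_dim hW (k - (ℓ : ℤ) - 1) (k - (ℓ : ℤ) - 2) (by ring)
  have e6 := my_gr_symm hW (ℓ + 1) (k + (ℓ : ℤ) + 1) (k - (ℓ : ℤ) - 1)
    (by push_cast; ring) (by push_cast; ring)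
  have e7 := my_ker_dim hW ℓ (k + (ℓ : ℤ) - 1) (k - (ℓ : ℤ) - 1) (by push_cast; ring)
    (by push_cast; ring)
  have e8 := my_ker_dim hW (ℓ + 1) (k + (ℓ : ℤ)) (k - (ℓ : ℤ) - 2) (by push_cast; ring)
    (by push_cast; ring)
  have e9 := my_ker_dim hW (ℓ + 1 + 1) (k + (ℓ : ℤ) + 1) (k - (ℓ : ℤ) - 3) (by push_cast; ring)
    (by push_cast; ring)
  have r1 := LinearMap.finrank_range_add_finrank_ker (N ^ ℓ)
  have r2 := LinearMap.finrank_range_add_finrank_ker (N ^ (ℓ + 1))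
  have r3 := LinearMap.finrank_range_add_finrank_ker (N ^ (ℓ + 1 + 1))
  omega
end

section
/- Let A be a nonempty finite set and let c be an integer with c ≥ |A|. Then the following identity holds in ℤ[X]: P_{c−1}(X) + Σ_{∅ ≠ K ⊆ A} (−1)^{|K|−1} · [ (P_{c−|K|−1}(X) − 1)·P_{|K|−1}(X) − P_{c−|K|−1}(X)·P_{|K|}(X) ] = 0, where P_m(X) = Σ_{s=0}^{m} X^s and P_{−1}(X) = 0. -/
open Polynomial Finset

/-- For `m : ℤ`, the polynomial `P_m(X) = 1 + X + ... + X^m` (and `P_m = 0` for `m < 0`). -/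
noncomputable def Ppoly (m : ℤ) : Polynomial ℤ :=
  ∑ s ∈ Finset.range (m + 1).toNat, Polynomial.X ^ s

/-! Every summand equals `(-1)^|K| · P_{c-1}`: writing `c = k + j`, the bracket is
`-(P_{k-1} + X^k P_{j-1}) = -P_{c-1}`, because `P_k = P_{k-1} + X^k`. The signs then sum to
`-1` over the nonempty subsets of `A`, which cancels the leading `P_{c-1}`. -/

lemma Ppoly_natCast_sub_one (n : ℕ) : Ppoly ((n : ℤ) - 1) = ∑ s ∈ range n, X ^ s := by
  simp [Ppoly]

lemma Ppoly_natCast (n : ℕ) : Ppoly (n : ℤ) = ∑ s ∈ range (n + 1), X ^ s := by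
  simpa using Ppoly_natCast_sub_one (n + 1)

lemma Ppoly_bracket_eq_neg (c : ℤ) (k : ℕ) (hkc : (k : ℤ) ≤ c) :
    (Ppoly (c - k - 1) - 1) * Ppoly ((k : ℤ) - 1) - Ppoly (c - k - 1) * Ppoly (k : ℤ)
      = -Ppoly (c - 1) := by
  obtain ⟨j, rfl⟩ : ∃ j : ℕ, c = k + j := ⟨(c - k).toNat, by omega⟩
  have hj : (k : ℤ) + j - k - 1 = (j : ℤ) - 1 := by ring
  have hkj : (k : ℤ) + j - 1 = ((k + j : ℕ) : ℤ) - 1 := by push_cast; ring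
  rw [hj, hkj, Ppoly_natCast_sub_one, Ppoly_natCast_sub_one, Ppoly_natCast_sub_one,
    Ppoly_natCast, sum_range_succ, sum_range_add]
  simp only [pow_add, ← mul_sum]
  ring

lemma sum_powerset_erase_empty_neg_one_pow {R : Type*} [Ring R] {ι : Type*} [DecidableEq ι]
    {A : Finset ι} (hA : A.Nonempty) :
    ∑ K ∈ A.powerset.erase ∅, (-1 : R) ^ K.card = -1 := by
  have hall : ∑ K ∈ A.powerset, (-1 : R) ^ K.card = 0 := by
    exact_mod_cast congrArg (Int.cast : ℤ → R) (sum_powerset_neg_one_pow_card_of_nonempty hA)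
  rw [← sum_erase_add _ _ (empty_mem_powerset A)] at hall
  simpa using eq_neg_of_add_eq_zero_left hall

/-- Let `A` be a nonempty finite set and `c ≥ |A|` an integer.  Then in `ℤ[X]`:
`P_{c−1} + Σ_{∅≠K⊆A} (−1)^{|K|−1}·[(P_{c−|K|−1} − 1)·P_{|K|−1} − P_{c−|K|−1}·P_{|K|}] = 0`. -/
theorem stmt12 {ι : Type*} [DecidableEq ι] (A : Finset ι) (hA : A.Nonempty)
    (c : ℤ) (hc : (A.card : ℤ) ≤ c) :
    Ppoly (c - 1) +
      ∑ K ∈ A.powerset.erase ∅,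
        (-1 : Polynomial ℤ) ^ (K.card - 1) *
          ((Ppoly (c - K.card - 1) - 1) * Ppoly ((K.card : ℤ) - 1) -
            Ppoly (c - K.card - 1) * Ppoly (K.card : ℤ))
      = 0 := by
  have hterm : ∀ K ∈ A.powerset.erase ∅,
      (-1 : Polynomial ℤ) ^ (K.card - 1) *
        ((Ppoly (c - K.card - 1) - 1) * Ppoly ((K.card : ℤ) - 1) -
          Ppoly (c - K.card - 1) * Ppoly (K.card : ℤ))
      = (-1) ^ K.card * Ppoly (c - 1) := by
    intro K hK
    obtain ⟨hK0, hKA⟩ := mem_erase.mp hK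
    have hkc : (K.card : ℤ) ≤ c :=
      le_trans (by exact_mod_cast card_le_card (mem_powerset.mp hKA)) hc
    rw [Ppoly_bracket_eq_neg c K.card hkc, ← pow_sub_one_mul (card_ne_zero.mpr
      (nonempty_iff_ne_empty.mpr hK0))]
    ring
  rw [sum_congr rfl hterm, ← sum_mul, sum_powerset_erase_empty_neg_one_pow hA]
  ring
end

section
/- Let A be a nonempty finite set, let b ≥ 1 be an integer, and let c be an integer with c ≥ |A|. Then the following identity holds in ℤ[X]: Σ_{K ⊆ A} (−1)^{|K|+b−1} · [ (P_{c−|K|−1}(X) − 1)·P_{|K|+b−1}(X) − P_{c−|K|−1}(X)·P_{|K|+b}(X) ] = 0, where the sum ranges over all subsets K of A (including the empty set), P_m(X) = Σ_{s=0}^{m} X^s and P_{−1}(X) = 0. -/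
open Polynomial Finset

lemma Ppoly_succ (m : ℤ) (hm : 0 ≤ m) :
    Ppoly m = Ppoly (m - 1) + Polynomial.X ^ m.toNat := by
  have h1 : (m + 1).toNat = m.toNat + 1 := by omega
  have h2 : (m - 1 + 1).toNat = m.toNat := by omega
  rw [Ppoly, Ppoly, h1, h2, Finset.sum_range_succ]

lemma Ppoly_mul_X (m : ℤ) (hm : 0 ≤ m) :
    Polynomial.X * Ppoly (m - 1) = Ppoly m - 1 := by
  have h1 : (m + 1).toNat = m.toNat + 1 := by omega
  have h2 : (m - 1 + 1).toNat = m.toNat := by omega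
  rw [Ppoly, Ppoly, h1, h2, Finset.mul_sum, Finset.sum_range_succ']
  simp [pow_succ, mul_comm]

lemma inner_eq (b k : ℕ) (c : ℤ) (hk : (k : ℤ) + 1 ≤ c) :
    (Ppoly (c - k - 1) - 1) * Ppoly ((k : ℤ) + b - 1) -
        Ppoly (c - k - 1) * Ppoly ((k : ℤ) + b)
      = (Ppoly (c - ((k : ℤ) + 1) - 1) - 1) * Ppoly ((k : ℤ) + 1 + b - 1) -
        Ppoly (c - ((k : ℤ) + 1) - 1) * Ppoly ((k : ℤ) + 1 + b) := by
  have e1 : Ppoly ((k : ℤ) + b) = Ppoly ((k : ℤ) + b - 1) + Polynomial.X ^ (k + b) := by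
    have h := Ppoly_succ ((k : ℤ) + b) (by positivity)
    rwa [show ((k : ℤ) + b).toNat = k + b by omega] at h
  have e2 : Ppoly ((k : ℤ) + 1 + b) = Ppoly ((k : ℤ) + 1 + b - 1) + Polynomial.X ^ (k + b + 1) := by
    have h := Ppoly_succ ((k : ℤ) + 1 + b) (by positivity)
    rwa [show ((k : ℤ) + 1 + b).toNat = k + b + 1 by omega] at h
  have e2' : Ppoly ((k : ℤ) + 1 + b - 1) = Ppoly ((k : ℤ) + b - 1) + Polynomial.X ^ (k + b) := by
    have h := Ppoly_succ ((k : ℤ) + b) (by positivity)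
    rw [show ((k : ℤ) + b).toNat = k + b by omega] at h
    rw [show (k : ℤ) + 1 + b - 1 = (k : ℤ) + b by ring]
    exact h
  have e3 : Polynomial.X * Ppoly (c - ((k : ℤ) + 1) - 1) = Ppoly (c - k - 1) - 1 := by
    have h := Ppoly_mul_X (c - k - 1) (by omega)
    rwa [show c - (k : ℤ) - 1 - 1 = c - ((k : ℤ) + 1) - 1 by ring] at h
  rw [e1, e2, e2']
  linear_combination (Polynomial.X ^ (k + b)) * e3

/-- Let `A` be a nonempty finite set, `b ≥ 1` an integer and `c ≥ |A|` an integer.  Then in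
`ℤ[X]`, summing over all subsets `K ⊆ A` (including `∅`):
`Σ_{K⊆A} (−1)^{|K|+b−1}·[(P_{c−|K|−1} − 1)·P_{|K|+b−1} − P_{c−|K|−1}·P_{|K|+b}] = 0`. -/
theorem stmt13 {ι : Type*} [DecidableEq ι] (A : Finset ι) (hA : A.Nonempty)
    (b : ℕ) (hb : 1 ≤ b) (c : ℤ) (hc : (A.card : ℤ) ≤ c) :
    ∑ K ∈ A.powerset,
        (-1 : Polynomial ℤ) ^ (K.card + b - 1) *
          ((Ppoly (c - K.card - 1) - 1) * Ppoly ((K.card : ℤ) + b - 1) -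
            Ppoly (c - K.card - 1) * Ppoly ((K.card : ℤ) + b))
      = 0 := by
  obtain ⟨a, ha⟩ := hA
  have hae : a ∉ A.erase a := Finset.notMem_erase a A
  rw [← Finset.insert_erase ha, Finset.sum_powerset_insert hae, ← Finset.sum_add_distrib]
  apply Finset.sum_eq_zero
  intro K hK
  have hKsub : K ⊆ A.erase a := Finset.mem_powerset.mp hK
  have haK : a ∉ K := fun h => hae (hKsub h)
  have hcard : (insert a K).card = K.card + 1 := Finset.card_insert_of_notMem haK
  have hle : K.card + 1 ≤ A.card := by
    have := Finset.card_le_card hKsub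
    have h2 : (A.erase a).card = A.card - 1 := Finset.card_erase_of_mem ha
    have h3 : 1 ≤ A.card := Finset.card_pos.mpr ⟨a, ha⟩
    omega
  have hk : (K.card : ℤ) + 1 ≤ c := by
    have : ((K.card : ℤ) + 1) ≤ (A.card : ℤ) := by exact_mod_cast hle
    omega
  rw [hcard]
  have hsign : ((-1 : Polynomial ℤ)) ^ (K.card + 1 + b - 1) =
      -((-1 : Polynomial ℤ)) ^ (K.card + b - 1) := by
    rw [show K.card + 1 + b - 1 = (K.card + b - 1) + 1 by omega, pow_succ]
    ring
  push_cast
  rw [hsign, inner_eq b K.card c hk]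
  ring
end
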